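/- arXiv:1607.07682 — 4 statements merged into one kernel-verified Lean document; each statement's English description precedes it below -/
import Mathlib

section
/- (Rademacher) For every integer n ≥ 3 and every m with 2 ≤ m ≤ n-1 and gcd(m,n)=1, we have S(1,n) > S(m,n). -/
open Finset

-- The sawtooth function ((t)).
open Classical in
noncomputable def saw (t : ℝ) : ℝ :=
  if ∃ z : ℤ, (z : ℝ) = t then 0 else t - ⌊t⌋ - 1/2

/-- The normalized Dedekind sum `S m n = 12 * s(m,n)`, with
`s(m,n) = Σ_{k=1}^{|n|} ((k/n))((mk/n))`. -/
noncomputable def S (m n : ℤ) : ℝ :=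
  12 * ∑ k ∈ Finset.Icc (1 : ℤ) |n|, saw ((k : ℝ) / n) * saw ((m : ℝ) * k / n)

lemma saw_int_add (z : ℤ) (t : ℝ) : saw ((z : ℝ) + t) = saw t := by
  unfold saw
  by_cases hc : ∃ w : ℤ, (w : ℝ) = t
  · obtain ⟨w, hw⟩ := hc
    rw [if_pos ⟨w + z, by push_cast; linarith⟩, if_pos ⟨w, hw⟩]
  · rw [if_neg hc, if_neg (fun hex => hc (by
      obtain ⟨w, hw⟩ := hex
      exact ⟨w - z, by push_cast; linarith⟩))]
    rw [add_comm, Int.floor_add_intCast]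
    push_cast; ring

lemma saw_mod (n a : ℤ) (hn : (n:ℝ) ≠ 0) :
    saw ((a:ℝ)/n) = saw (((a % n : ℤ) : ℝ)/n) := by
  have h2 : (a:ℝ) = (n:ℝ) * ((a / n : ℤ) : ℝ) + ((a % n : ℤ):ℝ) := by
    exact_mod_cast (Int.mul_ediv_add_emod a n).symm
  have key : (a:ℝ)/n = ((a / n : ℤ) : ℝ) + ((a % n : ℤ):ℝ)/n := by
    rw [h2]; field_simp
  rw [key, saw_int_add]

lemma saw_congr (n a b : ℤ) (hn : (n:ℝ) ≠ 0) (hab : a % n = b % n) :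
    saw ((a:ℝ)/n) = saw ((b:ℝ)/n) := by
  rw [saw_mod n a hn, saw_mod n b hn, hab]

lemma saw_of_mem (x : ℝ) (h0 : 0 < x) (h1 : x < 1) : saw x = x - 1/2 := by
  unfold saw
  rw [if_neg, Int.floor_eq_zero_iff.mpr ⟨h0.le, h1⟩]
  · push_cast; ring
  · rintro ⟨z, hz⟩
    rw [← hz] at h0 h1
    have h0' : (0:ℤ) < z := by exact_mod_cast h0
    have h1' : z < 1 := by exact_mod_cast h1
    omega

lemma eq_of_modeq (n a b : ℤ) (hn : 0 < n) (ha1 : 1 ≤ a) (ha2 : a ≤ n)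
    (hb1 : 1 ≤ b) (hb2 : b ≤ n) (hab : a % n = b % n) : a = b := by
  have hd : n ∣ b - a := Int.ModEq.dvd hab
  obtain ⟨c, hc⟩ := hd
  have hc0 : c = 0 := by
    rcases lt_trichotomy c 0 with hlt | he | hgt
    · exfalso
      have h1 : n * c ≤ n * (-1) := mul_le_mul_of_nonneg_left (by omega) hn.le
      linarith
    · exact he
    · exfalso
      have h1 : n * 1 ≤ n * c := mul_le_mul_of_nonneg_left (by omega) hn.le
      linarith
  rw [hc0, mul_zero] at hc; omega

lemma sum_sq (n m : ℤ) (hn : 0 < n) (h : Int.gcd m n = 1) :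
    ∑ k ∈ Finset.Icc (1:ℤ) n, (saw (((m*k : ℤ):ℝ)/n))^2
      = ∑ k ∈ Finset.Icc (1:ℤ) n, (saw ((k:ℝ)/n))^2 := by
  have hco : IsCoprime m n := Int.isCoprime_iff_gcd_eq_one.mpr h
  obtain ⟨u, v, huv⟩ := hco
  have hnR : (n:ℝ) ≠ 0 := by positivity
  refine Finset.sum_nbij' (i := fun k => (m*k - 1) % n + 1)
    (j := fun k => (u*k - 1) % n + 1) ?_ ?_ ?_ ?_ ?_
  · intro k hk
    have h1 := Int.emod_nonneg (m*k - 1) hn.ne'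
    have h2 := Int.emod_lt_of_pos (m*k - 1) hn
    simp only [Finset.mem_Icc]; omega
  · intro k hk
    have h1 := Int.emod_nonneg (u*k - 1) hn.ne'
    have h2 := Int.emod_lt_of_pos (u*k - 1) hn
    simp only [Finset.mem_Icc]; omega
  · intro k hk
    simp only [Finset.mem_Icc] at hk
    set X : ℤ := (m*k - 1) % n + 1 with hX
    have e1 : X % n = (m*k) % n := by
      rw [hX, Int.emod_add_emod]; norm_num
    have hd : n ∣ m*k - X := Int.ModEq.dvd e1
    obtain ⟨c, hc⟩ := hd
    have e2 : u * X = u*(m*k) + n * (-(u*c)) := by linear_combination (-u) * hc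
    have e3 : u*(m*k) = k + n * (-(v*k)) := by linear_combination k * huv
    show (u*X - 1) % n + 1 = k
    apply eq_of_modeq n _ k hn
    · have h1 := Int.emod_nonneg (u*X - 1) hn.ne'
      omega
    · have h2 := Int.emod_lt_of_pos (u*X - 1) hn
      omega
    · exact hk.1
    · exact hk.2
    · calc ((u*X - 1) % n + 1) % n = (u*X - 1 + 1) % n := by rw [Int.emod_add_emod]
        _ = (u*X) % n := by norm_num
        _ = (u*(m*k) + n * (-(u*c))) % n := by rw [e2]
        _ = (u*(m*k)) % n := by rw [Int.add_mul_emod_self_left]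
        _ = (k + n * (-(v*k))) % n := by rw [e3]
        _ = k % n := by rw [Int.add_mul_emod_self_left]
  · intro k hk
    simp only [Finset.mem_Icc] at hk
    set Y : ℤ := (u*k - 1) % n + 1 with hY
    have e1 : Y % n = (u*k) % n := by
      rw [hY, Int.emod_add_emod]; norm_num
    have hd : n ∣ u*k - Y := Int.ModEq.dvd e1
    obtain ⟨c, hc⟩ := hd
    have e2 : m * Y = m*(u*k) + n * (-(m*c)) := by linear_combination (-m) * hc
    have e3 : m*(u*k) = k + n * (-(v*k)) := by linear_combination k * huv
    show (m*Y - 1) % n + 1 = k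
    apply eq_of_modeq n _ k hn
    · have h1 := Int.emod_nonneg (m*Y - 1) hn.ne'
      omega
    · have h2 := Int.emod_lt_of_pos (m*Y - 1) hn
      omega
    · exact hk.1
    · exact hk.2
    · calc ((m*Y - 1) % n + 1) % n = (m*Y - 1 + 1) % n := by rw [Int.emod_add_emod]
        _ = (m*Y) % n := by norm_num
        _ = (m*(u*k) + n * (-(m*c))) % n := by rw [e2]
        _ = (m*(u*k)) % n := by rw [Int.add_mul_emod_self_left]
        _ = (k + n * (-(v*k))) % n := by rw [e3]
        _ = k % n := by rw [Int.add_mul_emod_self_left]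
  · intro k hk
    have hmod : (m*k) % n = ((m*k - 1) % n + 1) % n := by
      rw [Int.emod_add_emod]; norm_num
    rw [saw_congr n (m*k) ((m*k - 1) % n + 1) hnR hmod]

theorem stmt1 (n m : ℤ) (hn : 3 ≤ n) (hm1 : 2 ≤ m) (hm2 : m ≤ n - 1)
    (h : Int.gcd m n = 1) : S 1 n > S m n := by
  have hn0 : 0 < n := by omega
  have habs : |n| = n := abs_of_pos hn0
  have hnR : (0:ℝ) < n := by exact_mod_cast hn0
  have hnR' : (n:ℝ) ≠ 0 := hnR.ne'
  set A : ℤ → ℝ := fun k => saw ((k:ℝ)/n) with hA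
  set B : ℤ → ℝ := fun k => saw ((m:ℝ)*k/n) with hB
  have hS1 : S 1 n = 12 * ∑ k ∈ Finset.Icc (1:ℤ) n, (A k)^2 := by
    unfold S
    rw [habs]
    congr 1
    apply Finset.sum_congr rfl
    intro k hk
    simp [hA, one_mul, sq]
  have hSm : S m n = 12 * ∑ k ∈ Finset.Icc (1:ℤ) n, A k * B k := by
    unfold S
    rw [habs]
  have hBsq : ∑ k ∈ Finset.Icc (1:ℤ) n, (B k)^2
      = ∑ k ∈ Finset.Icc (1:ℤ) n, (A k)^2 := by
    have hss := sum_sq n m hn0 h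
    rw [← hss]
    apply Finset.sum_congr rfl
    intro k hk
    have hcast : ((m*k : ℤ):ℝ)/n = (m:ℝ)*k/n := by push_cast; ring
    rw [hB]
    simp only
    rw [hcast]
  have h1mem : (1:ℤ) ∈ Finset.Icc (1:ℤ) n := by
    simp only [Finset.mem_Icc]; omega
  have hA1 : A 1 = 1/(n:ℝ) - 1/2 := by
    have h0 : (0:ℝ) < 1/(n:ℝ) := by positivity
    have h1 : 1/(n:ℝ) < 1 := by
      rw [div_lt_one hnR]
      exact_mod_cast (by omega : (1:ℤ) < n)
    have := saw_of_mem (1/(n:ℝ)) h0 h1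
    rw [hA]; simp only [Int.cast_one]; exact this
  have hB1 : B 1 = (m:ℝ)/n - 1/2 := by
    have hmR : (2:ℝ) ≤ (m:ℝ) := by exact_mod_cast hm1
    have hmR2 : (m:ℝ) ≤ (n:ℝ) - 1 := by
      have : ((m:ℤ):ℝ) ≤ ((n-1 : ℤ):ℝ) := by exact_mod_cast hm2
      push_cast at this; linarith
    have h0 : (0:ℝ) < (m:ℝ)/n := by positivity
    have h1 : (m:ℝ)/n < 1 := by rw [div_lt_one hnR]; linarith
    have := saw_of_mem ((m:ℝ)/n) h0 h1
    rw [hB]; simp only [Int.cast_one, mul_one]; exact this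
  have hANe : A 1 ≠ B 1 := by
    rw [hA1, hB1]
    intro heq
    have h1 : (1:ℝ)/n = (m:ℝ)/n := by linarith
    have h2 : (1:ℝ) = (m:ℝ) := by
      field_simp at h1; linarith
    have h3 : (1:ℤ) = m := by exact_mod_cast h2
    omega
  have hpos : 0 < ∑ k ∈ Finset.Icc (1:ℤ) n, (A k - B k)^2 := by
    have hle : (A 1 - B 1)^2 ≤ ∑ k ∈ Finset.Icc (1:ℤ) n, (A k - B k)^2 :=
      Finset.single_le_sum (f := fun k => (A k - B k)^2)
        (fun k _ => sq_nonneg _) h1mem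
    have hne : A 1 - B 1 ≠ 0 := sub_ne_zero.mpr hANe
    have : 0 < (A 1 - B 1)^2 :=
      lt_of_le_of_ne (sq_nonneg _) (Ne.symm (pow_ne_zero 2 hne))
    linarith
  have hexpand : ∑ k ∈ Finset.Icc (1:ℤ) n, (A k - B k)^2
      = ∑ k ∈ Finset.Icc (1:ℤ) n, (A k)^2 + ∑ k ∈ Finset.Icc (1:ℤ) n, (B k)^2
        - 2 * ∑ k ∈ Finset.Icc (1:ℤ) n, A k * B k := by
    rw [Finset.mul_sum, ← Finset.sum_add_distrib, ← Finset.sum_sub_distrib]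
    apply Finset.sum_congr rfl
    intro k _
    ring
  rw [hS1, hSm]
  rw [hBsq] at hexpand
  linarith
end

section
/- (Reciprocity) For coprime positive integers k and n, S(k,n) + S(n,k) = n/k + k/n + 1/(kn) - 3. -/
open Finset

noncomputable def Pd (a b : ℤ) : ℤ := ∑ r ∈ Icc (1:ℤ) (b-1), r * (a*r % b)

lemma gauss2N (N : ℕ) : ∑ s ∈ Icc (1:ℤ) (N:ℤ), (2*s) = (N:ℤ)*(N+1) := by
  induction N with
  | zero => simp
  | succ n ih =>
    push_cast
    rw [show Icc (1:ℤ) ((n:ℤ)+1) = insert ((n:ℤ)+1) (Icc 1 (n:ℤ)) by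
        ext x; simp only [Finset.mem_insert, Finset.mem_Icc]; omega,
      Finset.sum_insert (by simp only [Finset.mem_Icc]; omega), ih]
    ring

lemma gauss2 (T : ℤ) (hT : 0 ≤ T) : ∑ s ∈ Icc (1:ℤ) T, (2*s) = T*(T+1) := by
  have := gauss2N T.toNat
  rwa [Int.toNat_of_nonneg hT] at this

lemma gauss6N (N : ℕ) : ∑ s ∈ Icc (1:ℤ) (N:ℤ), (6*s^2) = (N:ℤ)*(N+1)*(2*N+1) := by
  induction N with
  | zero => simp
  | succ n ih =>
    push_cast
    rw [show Icc (1:ℤ) ((n:ℤ)+1) = insert ((n:ℤ)+1) (Icc 1 (n:ℤ)) by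
        ext x; simp only [Finset.mem_insert, Finset.mem_Icc]; omega,
      Finset.sum_insert (by simp only [Finset.mem_Icc]; omega), ih]
    ring

lemma gauss6 (T : ℤ) (hT : 0 ≤ T) : ∑ s ∈ Icc (1:ℤ) T, (6*s^2) = T*(T+1)*(2*T+1) := by
  have := gauss6N T.toNat
  rwa [Int.toNat_of_nonneg hT] at this

lemma floor_int_div (m b : ℤ) (hb : 0 < b) : ⌊(m:ℝ)/(b:ℝ)⌋ = m / b := by
  have hb' : (0:ℝ) < b := by exact_mod_cast hb
  rw [Int.floor_eq_iff]
  constructor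
  · rw [le_div_iff₀ hb']
    exact_mod_cast Int.ediv_mul_le m hb.ne'
  · rw [div_lt_iff₀ hb']
    exact_mod_cast Int.lt_ediv_add_one_mul_self m hb

lemma saw_div (m b : ℤ) (hb : 0 < b) (hnd : ¬ b ∣ m) :
    saw ((m:ℝ)/b) = ((m % b : ℤ):ℝ)/b - 1/2 := by
  have hb' : (0:ℝ) < b := by exact_mod_cast hb
  rw [saw, if_neg, floor_int_div m b hb]
  · have h2 : m % b = m - b * (m / b) := Int.emod_def m b
    rw [h2]; push_cast; field_simp
  · rintro ⟨z, hz⟩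
    apply hnd
    have h3 : (z:ℝ) * b = m := by field_simp at hz; linarith [hz]
    have h4 : z * b = m := by exact_mod_cast h3
    exact ⟨z, by rw [← h4]; ring⟩

lemma sum_emod_perm (a b : ℤ) (hb : 1 ≤ b) (h : Int.gcd a b = 1) (F : ℤ → ℤ) :
    ∑ r ∈ Icc (1:ℤ) (b-1), F (a*r % b) = ∑ r ∈ Icc (1:ℤ) (b-1), F r := by
  have hb0 : (0:ℤ) < b := hb
  set u := Int.gcdA a b with hu
  set v := Int.gcdB a b with hv
  have hbez : a * u + b * v = 1 := by
    have := Int.gcd_eq_gcd_ab a b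
    rw [h] at this; exact_mod_cast this.symm
  have hmem : ∀ (c r : ℤ), (b ∣ c * r → b ∣ r) → r ∈ Icc (1:ℤ) (b-1) →
      c * r % b ∈ Icc (1:ℤ) (b-1) := by
    intro c r hdvd hr
    rw [Finset.mem_Icc] at hr ⊢
    have h1 : 0 ≤ c * r % b := Int.emod_nonneg _ hb0.ne'
    have h2 : c * r % b < b := Int.emod_lt_of_pos _ hb0
    have h3 : c * r % b ≠ 0 := by
      intro h0
      have : b ∣ r := hdvd (Int.dvd_of_emod_eq_zero h0)
      have := Int.le_of_dvd (by omega) this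
      omega
    omega
  have hcop : ∀ r : ℤ, b ∣ a * r → b ∣ r := fun r hr =>
    Int.dvd_of_dvd_mul_right_of_gcd_one hr (by rwa [Int.gcd_comm])
  have hcopu : ∀ r : ℤ, b ∣ u * r → b ∣ r := by
    intro r hr
    have h1 : b ∣ a * (u * r) := Dvd.dvd.mul_left hr a
    have h2 : r = a * (u * r) + b * (v * r) := by linear_combination r * hbez.symm
    rw [h2]; exact dvd_add h1 (Dvd.intro _ rfl)
  have hinv : ∀ (c d r : ℤ), c * d % b = 1 % b → r ∈ Icc (1:ℤ) (b-1) →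
      c * (d * r % b) % b = r := by
    intro c d r hcd hr
    rw [Finset.mem_Icc] at hr
    have e1 : c * (d * r % b) ≡ c * (d * r) [ZMOD b] :=
      Int.ModEq.mul_left c (Int.emod_emod_of_dvd _ dvd_rfl)
    have e2 : c * (d * r) ≡ 1 * r [ZMOD b] := by
      have hcd' : (c * d) ≡ 1 [ZMOD b] := hcd
      calc c * (d * r) = (c * d) * r := by ring
        _ ≡ 1 * r [ZMOD b] := Int.ModEq.mul_right r hcd'
    have e3 : c * (d * r % b) ≡ r [ZMOD b] := by
      simpa using e1.trans e2
    have e4 := e3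
    unfold Int.ModEq at e4
    rw [e4, Int.emod_eq_of_lt (by omega) (by omega)]
  have hau : a * u % b = 1 % b := by
    have : a * u ≡ 1 [ZMOD b] := Int.modEq_iff_dvd.mpr ⟨v, by linarith⟩
    exact this
  have hua : u * a % b = 1 % b := by rw [mul_comm]; exact hau
  refine Finset.sum_nbij' (fun r => a * r % b) (fun r => u * r % b) ?_ ?_ ?_ ?_ ?_
  · intro r hr; exact hmem a r (hcop r) hr
  · intro r hr; exact hmem u r (hcopu r) hr
  · intro r hr; exact hinv u a r hua hr
  · intro r hr; exact hinv a u r hau hr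
  · intro r hr; rfl

lemma count (a b : ℤ) (ha : 1 ≤ a) (hb : 1 ≤ b) (h : Int.gcd a b = 1) :
    ∑ r ∈ Icc (1:ℤ) (b-1), ∑ s ∈ Icc (1:ℤ) (a-1), (2*s)
      = (∑ s ∈ Icc (1:ℤ) (a-1), 2*(s * (b*s/a)))
        + ∑ r ∈ Icc (1:ℤ) (b-1), ((a*r/b) * (a*r/b+1)) := by
  have ha0 : (0:ℤ) < a := ha
  have hb0 : (0:ℤ) < b := hb
  have hne : ∀ r s : ℤ, 1 ≤ r → r ≤ b-1 → 1 ≤ s → b*s ≠ a*r := by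
    intro r s h1 h2 h3 heq
    have hd : b ∣ a * r := ⟨s, heq.symm⟩
    have : b ∣ r := Int.dvd_of_dvd_mul_right_of_gcd_one hd (by rwa [Int.gcd_comm])
    have := Int.le_of_dvd (by omega) this
    omega
  have split : ∀ r ∈ Icc (1:ℤ) (b-1), ∑ s ∈ Icc (1:ℤ) (a-1), (2*s)
      = (∑ s ∈ Icc (1:ℤ) (a-1), if b*s < a*r then 2*s else 0)
        + (∑ s ∈ Icc (1:ℤ) (a-1), if a*r < b*s then 2*s else 0) := by
    intro r hr
    rw [Finset.mem_Icc] at hr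
    rw [← Finset.sum_add_distrib]
    apply Finset.sum_congr rfl
    intro s hs
    rw [Finset.mem_Icc] at hs
    have hne' : b*s ≠ a*r := hne r s hr.1 hr.2 hs.1
    by_cases hlt : b*s < a*r
    · rw [if_pos hlt, if_neg (by omega)]; ring
    · rw [if_neg hlt, if_pos (by omega)]; ring
  have piece1 : ∀ r ∈ Icc (1:ℤ) (b-1),
      (∑ s ∈ Icc (1:ℤ) (a-1), if b*s < a*r then 2*s else 0)
        = (a*r/b) * (a*r/b+1) := by
    intro r hr
    rw [Finset.mem_Icc] at hr
    have hfil : Finset.filter (fun s => b*s < a*r) (Icc (1:ℤ) (a-1)) = Icc (1:ℤ) (a*r/b) := by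
      ext s
      simp only [Finset.mem_filter, Finset.mem_Icc]
      constructor
      · rintro ⟨⟨h1, h2⟩, h3⟩
        refine ⟨h1, ?_⟩
        rw [Int.le_ediv_iff_mul_le hb0, mul_comm]
        omega
      · rintro ⟨h1, h2⟩
        have hsb : s * b ≤ a*r := (Int.le_ediv_iff_mul_le hb0).mp h2
        have hTle : a*r/b ≤ a-1 := by
          have : a*r/b < a := by
            rw [Int.ediv_lt_iff_lt_mul hb0]; nlinarith
          omega
        have hne' : b*s ≠ a*r := hne r s hr.1 hr.2 h1
        have hbs : b*s ≤ a*r := by rw [mul_comm]; exact hsb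
        exact ⟨⟨h1, le_trans h2 hTle⟩, by omega⟩
    rw [← Finset.sum_filter, hfil,
      gauss2 _ (Int.ediv_nonneg (mul_nonneg (by omega) (by omega)) (by omega))]
  have piece2 : ∀ s ∈ Icc (1:ℤ) (a-1),
      (∑ r ∈ Icc (1:ℤ) (b-1), if a*r < b*s then 2*s else 0)
        = 2*(s * (b*s/a)) := by
    intro s hs
    rw [Finset.mem_Icc] at hs
    have hfil : Finset.filter (fun r => a*r < b*s) (Icc (1:ℤ) (b-1)) = Icc (1:ℤ) (b*s/a) := by
      ext r
      simp only [Finset.mem_filter, Finset.mem_Icc]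
      constructor
      · rintro ⟨⟨h1, h2⟩, h3⟩
        refine ⟨h1, ?_⟩
        rw [Int.le_ediv_iff_mul_le ha0, mul_comm]
        omega
      · rintro ⟨h1, h2⟩
        have hra : r * a ≤ b*s := (Int.le_ediv_iff_mul_le ha0).mp h2
        have hTle : b*s/a ≤ b-1 := by
          have : b*s/a < b := by
            rw [Int.ediv_lt_iff_lt_mul ha0]; nlinarith
          omega
        have hne' : b*s ≠ a*r := hne r s h1 (le_trans h2 hTle) hs.1
        have har : a*r ≤ b*s := by rw [mul_comm]; exact hra
        exact ⟨⟨h1, le_trans h2 hTle⟩, by omega⟩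
    rw [← Finset.sum_filter, hfil, Finset.sum_const, Int.card_Icc]
    have h0 : (0:ℤ) ≤ b*s/a := Int.ediv_nonneg (mul_nonneg (by omega) (by omega)) (by omega)
    rw [show b*s/a + 1 - 1 = b*s/a by ring]
    rw [nsmul_eq_mul, Int.toNat_of_nonneg h0]
    ring
  calc ∑ r ∈ Icc (1:ℤ) (b-1), ∑ s ∈ Icc (1:ℤ) (a-1), (2*s)
      = ∑ r ∈ Icc (1:ℤ) (b-1),
          ((∑ s ∈ Icc (1:ℤ) (a-1), if b*s < a*r then 2*s else 0)
            + (∑ s ∈ Icc (1:ℤ) (a-1), if a*r < b*s then 2*s else 0)) :=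
        Finset.sum_congr rfl split
    _ = (∑ r ∈ Icc (1:ℤ) (b-1), ∑ s ∈ Icc (1:ℤ) (a-1), if a*r < b*s then 2*s else 0)
        + ∑ r ∈ Icc (1:ℤ) (b-1), ((a*r/b) * (a*r/b+1)) := by
        rw [Finset.sum_add_distrib, Finset.sum_congr rfl piece1, add_comm]
    _ = (∑ s ∈ Icc (1:ℤ) (a-1), 2*(s * (b*s/a)))
        + ∑ r ∈ Icc (1:ℤ) (b-1), ((a*r/b) * (a*r/b+1)) := by
        rw [Finset.sum_comm, Finset.sum_congr rfl piece2]

lemma Skey (a b : ℤ) (hb : 1 ≤ b) (h : Int.gcd a b = 1) :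
    S a b = 12 * ((Pd a b : ℝ))/(b:ℝ)^2 - 3*((b:ℝ)-1) := by
  have hb0 : (0:ℤ) < b := hb
  have hbR : (0:ℝ) < b := by exact_mod_cast hb0
  rw [S, abs_of_pos hb0]
  have hsplit : Icc (1:ℤ) b = insert b (Icc 1 (b-1)) := by
    ext x; simp only [Finset.mem_insert, Finset.mem_Icc]; omega
  rw [hsplit, Finset.sum_insert (by simp only [Finset.mem_Icc]; omega)]
  have hb1 : saw ((b:ℝ)/b) = 0 := by
    rw [div_self hbR.ne', saw, if_pos ⟨1, by norm_num⟩]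
  rw [hb1, zero_mul, zero_add]
  have hterm : ∀ j ∈ Icc (1:ℤ) (b-1),
      saw ((j:ℝ)/b) * saw ((a:ℝ)*j/b)
        = ((j:ℝ)*((a*j % b : ℤ):ℝ))/(b:ℝ)^2 - (j:ℝ)/(2*(b:ℝ))
          - ((a*j % b : ℤ):ℝ)/(2*(b:ℝ)) + 1/4 := by
    intro j hj
    rw [Finset.mem_Icc] at hj
    have hnd1 : ¬ b ∣ j := fun hd => by
      have := Int.le_of_dvd (by omega) hd; omega
    have hnd2 : ¬ b ∣ a*j := fun hd =>
      hnd1 (Int.dvd_of_dvd_mul_right_of_gcd_one hd (by rwa [Int.gcd_comm]))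
    have e1 : saw ((j:ℝ)/b) = ((j % b : ℤ):ℝ)/b - 1/2 := saw_div j b hb0 hnd1
    have e2 : saw ((a:ℝ)*j/b) = ((a*j % b : ℤ):ℝ)/b - 1/2 := by
      have e : (a:ℝ)*j = ((a*j : ℤ):ℝ) := by push_cast; ring
      rw [e]; exact saw_div (a*j) b hb0 hnd2
    rw [e1, e2, Int.emod_eq_of_lt (by omega) (by omega)]
    field_simp
    ring
  have hsum : ∑ j ∈ Icc (1:ℤ) (b-1), (saw ((j:ℝ)/b) * saw ((a:ℝ)*j/b))
      = ((Pd a b : ℤ) : ℝ)/(b:ℝ)^2 - ((∑ j ∈ Icc (1:ℤ) (b-1), j : ℤ) : ℝ)/(b:ℝ)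
        + ((b:ℝ)-1)/4 := by
    rw [Finset.sum_congr rfl hterm, Finset.sum_add_distrib, Finset.sum_sub_distrib,
      Finset.sum_sub_distrib, ← Finset.sum_div, ← Finset.sum_div, ← Finset.sum_div,
      Finset.sum_const, Int.card_Icc]
    have hSp : ∑ j ∈ Icc (1:ℤ) (b-1), ((j:ℝ)*((a*j % b : ℤ):ℝ)) = ((Pd a b : ℤ) : ℝ) := by
      rw [Pd]; push_cast; rfl
    have hperm : (∑ j ∈ Icc (1:ℤ) (b-1), (a*j % b)) = ∑ j ∈ Icc (1:ℤ) (b-1), j :=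
      sum_emod_perm a b hb h id
    have hSr : ∑ j ∈ Icc (1:ℤ) (b-1), ((a*j % b : ℤ):ℝ)
        = ((∑ j ∈ Icc (1:ℤ) (b-1), j : ℤ) : ℝ) := by
      rw [← hperm]; push_cast; rfl
    have hS1 : ∑ j ∈ Icc (1:ℤ) (b-1), (j:ℝ) = ((∑ j ∈ Icc (1:ℤ) (b-1), j : ℤ) : ℝ) := by
      push_cast; rfl
    have hcard : (((b - 1 + 1 - 1).toNat : ℕ) : ℝ) = (b:ℝ) - 1 := by
      rw [show b-1+1-1 = b-1 by ring, ← Int.cast_natCast, Int.toNat_of_nonneg (by omega)]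
      push_cast; ring
    rw [hSp, hSr, hS1, nsmul_eq_mul, hcard]
    set X := ((∑ j ∈ Icc (1:ℤ) (b-1), j : ℤ) : ℝ)
    field_simp
    ring
  rw [hsum]
  have hg : (2:ℤ) * (∑ j ∈ Icc (1:ℤ) (b-1), j) = (b-1)*b := by
    rw [Finset.mul_sum]
    have := gauss2 (b-1) (by omega)
    rw [this]; ring
  have hgR : 2 * ((∑ j ∈ Icc (1:ℤ) (b-1), j : ℤ) : ℝ) = ((b:ℝ)-1)*(b:ℝ) := by
    exact_mod_cast congrArg (fun x : ℤ => (x:ℝ)) hg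
  push_cast at hgR ⊢
  field_simp
  linear_combination (-24*(b:ℝ)) * hgR

lemma intid (a b : ℤ) (ha : 1 ≤ a) (hb : 1 ≤ b) (h : Int.gcd a b = 1) :
    12*a^2*(Pd a b) + 12*b^2*(Pd b a)
      = a*b^3 + a^3*b + a*b + 3*a^3*b^2 + 3*a^2*b^3 - 9*a^2*b^2 := by
  have hab : Int.gcd b a = 1 := by rwa [Int.gcd_comm]
  have h1 : Pd a b = a*(∑ r ∈ Icc (1:ℤ) (b-1), r^2)
      - b*(∑ r ∈ Icc (1:ℤ) (b-1), r*(a*r/b)) := by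
    rw [Pd, Finset.mul_sum, Finset.mul_sum, ← Finset.sum_sub_distrib]
    exact Finset.sum_congr rfl fun r _ => by rw [Int.emod_def]; ring
  have h5 : Pd b a = b*(∑ s ∈ Icc (1:ℤ) (a-1), s^2)
      - a*(∑ s ∈ Icc (1:ℤ) (a-1), s*(b*s/a)) := by
    rw [Pd, Finset.mul_sum, Finset.mul_sum, ← Finset.sum_sub_distrib]
    exact Finset.sum_congr rfl fun s _ => by rw [Int.emod_def]; ring
  have h2 : (∑ r ∈ Icc (1:ℤ) (b-1), r^2)
      = a^2*(∑ r ∈ Icc (1:ℤ) (b-1), r^2) - 2*a*b*(∑ r ∈ Icc (1:ℤ) (b-1), r*(a*r/b))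
        + b^2*(∑ r ∈ Icc (1:ℤ) (b-1), (a*r/b)^2) := by
    conv_lhs => rw [← sum_emod_perm a b hb h (·^2)]
    rw [Finset.mul_sum, Finset.mul_sum, Finset.mul_sum, ← Finset.sum_sub_distrib,
      ← Finset.sum_add_distrib]
    exact Finset.sum_congr rfl fun r _ => by rw [Int.emod_def]; ring
  have h3 : (∑ r ∈ Icc (1:ℤ) (b-1), r)
      = a*(∑ r ∈ Icc (1:ℤ) (b-1), r) - b*(∑ r ∈ Icc (1:ℤ) (b-1), (a*r/b)) := by
    conv_lhs => rw [← sum_emod_perm a b hb h (fun x => x)]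
    rw [Finset.mul_sum, Finset.mul_sum, ← Finset.sum_sub_distrib]
    exact Finset.sum_congr rfl fun r _ => by rw [Int.emod_def]
  have hinner : (∑ s ∈ Icc (1:ℤ) (a-1), (2*s)) = (a-1)*a := by
    rw [gauss2 (a-1) (by omega)]; ring
  have h4 : (b-1)*((a-1)*a) = 2*(∑ s ∈ Icc (1:ℤ) (a-1), s * (b*s/a))
      + ((∑ r ∈ Icc (1:ℤ) (b-1), (a*r/b)^2) + (∑ r ∈ Icc (1:ℤ) (b-1), (a*r/b))) := by
    have hc := count a b ha hb h
    rw [Finset.sum_congr rfl (fun r _ => hinner), Finset.sum_const, Int.card_Icc,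
      show b-1+1-1 = b-1 by ring, nsmul_eq_mul, Int.toNat_of_nonneg (by omega : (0:ℤ) ≤ b-1)]
        at hc
    rw [hc, Finset.mul_sum, ← Finset.sum_add_distrib]
    congr 1 <;> exact Finset.sum_congr rfl fun x _ => by ring
  have hs1 : 2*(∑ r ∈ Icc (1:ℤ) (b-1), r) = (b-1)*b := by
    rw [Finset.mul_sum, gauss2 (b-1) (by omega)]; ring
  have hs2 : 6*(∑ r ∈ Icc (1:ℤ) (b-1), r^2) = (b-1)*b*(2*b-1) := by
    rw [Finset.mul_sum, gauss6 (b-1) (by omega)]; ring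
  have ht2 : 6*(∑ s ∈ Icc (1:ℤ) (a-1), s^2) = (a-1)*a*(2*a-1) := by
    rw [Finset.mul_sum, gauss6 (a-1) (by omega)]; ring
  linear_combination 12*a^2*h1 + (-6*a)*h2 + 6*a*b*h3 + 6*a*b^2*h4 + 12*b^2*h5
    + 3*a*b*(a-1)*hs1 + (a^3+a)*hs2 + 2*b^3*ht2

theorem stmt2 (k n : ℤ) (hk : 1 ≤ k) (hn : 1 ≤ n) (h : Int.gcd k n = 1) :
    S k n + S n k = (n : ℝ)/k + (k : ℝ)/n + 1/((k : ℝ)*n) - 3 := by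
  have hg2 : Int.gcd n k = 1 := by rwa [Int.gcd_comm]
  rw [Skey k n hn h, Skey n k hk hg2]
  have hid := intid k n hk hn h
  have hidR : 12*(k:ℝ)^2*((Pd k n : ℤ):ℝ) + 12*(n:ℝ)^2*((Pd n k : ℤ):ℝ)
      = (k:ℝ)*(n:ℝ)^3 + (k:ℝ)^3*(n:ℝ) + (k:ℝ)*(n:ℝ) + 3*(k:ℝ)^3*(n:ℝ)^2
        + 3*(k:ℝ)^2*(n:ℝ)^3 - 9*(k:ℝ)^2*(n:ℝ)^2 := by
    exact_mod_cast congrArg (fun x : ℤ => (x:ℝ)) hid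
  have hk0 : (k:ℝ) ≠ 0 := by positivity
  have hn0 : (n:ℝ) ≠ 0 := by positivity
  field_simp
  linear_combination hidR
end

section
/- For every odd integer n ≥ 3, S(2,n) = (n^2 - 6n + 5)/(2n). -/
open Finset

lemma saw_lo {x : ℝ} (h0 : 0 < x) (h1 : x < 1) : saw x = x - 1/2 := by
  unfold saw
  rw [if_neg, Int.floor_eq_zero_iff.2 ⟨le_of_lt h0, h1⟩]
  · push_cast; ring
  · rintro ⟨z, rfl⟩
    have h0' : 0 < z := by exact_mod_cast h0
    have h1' : z < 1 := by exact_mod_cast h1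
    omega

lemma saw_hi {x : ℝ} (h0 : 1 < x) (h1 : x < 2) : saw x = x - 3/2 := by
  unfold saw
  have hf : ⌊x⌋ = 1 := Int.floor_eq_iff.2 ⟨by exact_mod_cast h0.le, by push_cast; linarith⟩
  rw [if_neg, hf]
  · push_cast; ring
  · rintro ⟨z, rfl⟩
    have h0' : 1 < z := by exact_mod_cast h0
    have h1' : z < 2 := by exact_mod_cast h1
    omega

lemma sum_Ioc_top (f : ℤ → ℝ) (a b : ℤ) (h : a ≤ b) :
    ∑ k ∈ Finset.Ioc a (b+1), f k = ∑ k ∈ Finset.Ioc a b, f k + f (b+1) := by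
  rw [show Finset.Ioc a (b+1) = insert (b+1) (Finset.Ioc a b) by ext x; simp; omega,
      Finset.sum_insert (by simp)]
  ring

lemma sum_Ioc_id (N : ℤ) (h : 0 ≤ N) :
    ∑ k ∈ Finset.Ioc (0:ℤ) N, (k:ℝ) = N*(N+1)/2 := by
  lift N to ℕ using h
  induction N with
  | zero => simp
  | succ p ih =>
    rw [show (((p+1:ℕ)):ℤ) = (p:ℤ)+1 by push_cast; ring,
        sum_Ioc_top _ _ _ (by positivity), ih]
    push_cast; ring

lemma sum_Ioc_sq (N : ℤ) (h : 0 ≤ N) :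
    ∑ k ∈ Finset.Ioc (0:ℤ) N, (k:ℝ)^2 = N*(N+1)*(2*N+1)/6 := by
  lift N to ℕ using h
  induction N with
  | zero => simp
  | succ p ih =>
    rw [show (((p+1:ℕ)):ℤ) = (p:ℤ)+1 by push_cast; ring,
        sum_Ioc_top _ _ _ (by positivity), ih]
    push_cast; ring

lemma sum_Ioc_split (f : ℤ → ℝ) {a b c : ℤ} (hab : a ≤ b) (hbc : b ≤ c) :
    ∑ k ∈ Finset.Ioc a b, f k + ∑ k ∈ Finset.Ioc b c, f k = ∑ k ∈ Finset.Ioc a c, f k := by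
  rw [← Finset.sum_union (by
        rw [Finset.disjoint_left]
        intro x hx hy
        simp only [Finset.mem_Ioc] at hx hy
        omega),
      Finset.Ioc_union_Ioc_eq_Ioc hab hbc]

theorem stmt5 (n : ℤ) (hn : 3 ≤ n) (hodd : Odd n) :
    S 2 n = ((n : ℝ)^2 - 6*n + 5) / (2*n) := by
  obtain ⟨m, hm⟩ := hodd
  have hm1 : 1 ≤ m := by omega
  have hnpos : (0:ℤ) < n := by omega
  have hnR : (0:ℝ) < (n:ℝ) := by exact_mod_cast hnpos
  have hne : (n:ℝ) ≠ 0 := ne_of_gt hnR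
  set F : ℤ → ℝ := fun k => saw ((k : ℝ) / n) * saw (((2:ℤ) : ℝ) * k / n) with hF
  have hS : S 2 n = 12 * ∑ k ∈ Finset.Ioc (0:ℤ) n, F k := by
    unfold S
    rw [abs_of_pos hnpos]
    congr 1
    apply Finset.sum_congr
    · ext k; simp; omega
    · intro k _; rfl
  rw [hS]
  have h1 : ∑ k ∈ Finset.Ioc (0:ℤ) n, F k
      = ∑ k ∈ Finset.Ioc (0:ℤ) (2*m), F k + F n := by
    rw [show n = 2*m + 1 by omega]
    exact sum_Ioc_top F 0 (2*m) (by omega)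
  have hFn : F n = 0 := by
    simp only [hF]
    rw [div_self hne, saw, if_pos ⟨1, by norm_num⟩, zero_mul]
  have h2 : ∑ k ∈ Finset.Ioc (0:ℤ) m, F k + ∑ k ∈ Finset.Ioc m (2*m), F k
      = ∑ k ∈ Finset.Ioc (0:ℤ) (2*m), F k :=
    sum_Ioc_split F (by omega) (by omega)
  have e1 : ∑ k ∈ Finset.Ioc (0:ℤ) m, F k
      = ∑ k ∈ Finset.Ioc (0:ℤ) m, ((2/(n:ℝ)^2) * (k:ℝ)^2 - (3/(2*n)) * k + 1/4) := by
    apply Finset.sum_congr rfl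
    intro k hk
    simp only [Finset.mem_Ioc] at hk
    have hk0 : (0:ℝ) < (k:ℝ) := by exact_mod_cast hk.1
    have hknz : k < n := by omega
    have hkn : (k:ℝ) < n := by exact_mod_cast hknz
    have h2knz : 2*k < n := by omega
    have h2kn : 2*(k:ℝ) < n := by exact_mod_cast h2knz
    simp only [hF]
    rw [saw_lo (by positivity) (by rw [div_lt_one hnR]; exact hkn),
        saw_lo (by positivity) (by rw [div_lt_one hnR]; push_cast; linarith)]
    field_simp
    ring
  have e2 : ∑ k ∈ Finset.Ioc m (2*m), F k
      = ∑ k ∈ Finset.Ioc m (2*m), ((2/(n:ℝ)^2) * (k:ℝ)^2 - (5/(2*n)) * k + 3/4) := by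
    apply Finset.sum_congr rfl
    intro k hk
    simp only [Finset.mem_Ioc] at hk
    have hk0z : (0:ℤ) < k := by omega
    have hk0 : (0:ℝ) < (k:ℝ) := by exact_mod_cast hk0z
    have hknz : k < n := by omega
    have hkn : (k:ℝ) < n := by exact_mod_cast hknz
    have h2kn : 2*(k:ℝ) < 2*n := by linarith
    have hx : n < 2*k := by omega
    have h2kn2 : (n:ℝ) < 2*(k:ℝ) := by exact_mod_cast hx
    simp only [hF]
    rw [saw_lo (by positivity) (by rw [div_lt_one hnR]; exact hkn),
        saw_hi (by rw [lt_div_iff₀ hnR]; push_cast; linarith)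
               (by rw [div_lt_iff₀ hnR]; push_cast; linarith)]
    field_simp
    ring
  have hid2 : ∑ k ∈ Finset.Ioc m (2*m), (k:ℝ)
      = (2*(m:ℝ))*(2*m+1)/2 - m*(m+1)/2 := by
    have hc := sum_Ioc_split (fun k : ℤ => (k:ℝ)) (by omega : (0:ℤ) ≤ m)
      (by omega : m ≤ 2*m)
    have a1 := sum_Ioc_id m (by omega)
    have a2 := sum_Ioc_id (2*m) (by omega)
    rw [a1, a2] at hc
    push_cast at hc
    linarith
  have hsq2 : ∑ k ∈ Finset.Ioc m (2*m), (k:ℝ)^2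
      = (2*(m:ℝ))*(2*m+1)*(4*m+1)/6 - m*(m+1)*(2*m+1)/6 := by
    have hc := sum_Ioc_split (fun k : ℤ => (k:ℝ)^2) (by omega : (0:ℤ) ≤ m)
      (by omega : m ≤ 2*m)
    have a1 := sum_Ioc_sq m (by omega)
    have a2 := sum_Ioc_sq (2*m) (by omega)
    rw [a1, a2] at hc
    push_cast at hc
    linarith
  have card1 : (Finset.Ioc (0:ℤ) m).card = m.toNat := by
    rw [Int.card_Ioc]; simp
  have card2 : (Finset.Ioc m (2*m)).card = m.toNat := by
    rw [Int.card_Ioc]; congr 1; omega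
  have hmc : ((m.toNat : ℝ)) = (m:ℝ) := by
    exact_mod_cast Int.toNat_of_nonneg (show (0:ℤ) ≤ m by omega)
  have E1 : ∑ k ∈ Finset.Ioc (0:ℤ) m, F k
      = (2/(n:ℝ)^2) * ((m:ℝ)*(m+1)*(2*m+1)/6) - (3/(2*n)) * ((m:ℝ)*(m+1)/2) + (m:ℝ) * (1/4) := by
    rw [e1, Finset.sum_add_distrib, Finset.sum_sub_distrib, ← Finset.mul_sum, ← Finset.mul_sum,
        sum_Ioc_id m (by omega), sum_Ioc_sq m (by omega), Finset.sum_const, card1, nsmul_eq_mul,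
        hmc]
  have E2 : ∑ k ∈ Finset.Ioc m (2*m), F k
      = (2/(n:ℝ)^2) * ((2*(m:ℝ))*(2*m+1)*(4*m+1)/6 - m*(m+1)*(2*m+1)/6)
        - (5/(2*n)) * ((2*(m:ℝ))*(2*m+1)/2 - m*(m+1)/2) + (m:ℝ) * (3/4) := by
    rw [e2, Finset.sum_add_distrib, Finset.sum_sub_distrib, ← Finset.mul_sum, ← Finset.mul_sum,
        hid2, hsq2, Finset.sum_const, card2, nsmul_eq_mul, hmc]
  rw [h1, hFn, ← h2, E1, E2]
  have hnm : (n:ℝ) = 2*(m:ℝ) + 1 := by exact_mod_cast hm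
  rw [hnm]
  have hm0 : (0:ℝ) < (m:ℝ) := by exact_mod_cast (show (0:ℤ) < m by omega)
  field_simp
  ring
end

section
/- (Rademacher-type theorem for k = 2) Let n ≥ 3 be odd. Then for all m ∈ {3, ..., n-1} with gcd(m,n) = 1 and m ≠ (n+1)/2, we have S(2,n) > S(m,n). -/
open Finset

namespace DedekindAux

noncomputable def Pd (m n : ℤ) : ℤ := ∑ k ∈ Finset.Ico 1 n, k * ((m*k) % n)

lemma sum_Ico_succ_top' {a b : ℤ} (h : a ≤ b) (f : ℤ → ℤ) :
    ∑ k ∈ Ico a (b+1), f k = (∑ k ∈ Ico a b, f k) + f b := by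
  have : Ico a (b+1) = insert b (Ico a b) := by
    ext k; simp only [Finset.mem_Ico, Finset.mem_insert]; omega
  rw [this, Finset.sum_insert Finset.right_notMem_Ico]; ring

lemma gauss1 {n : ℤ} (hn : 1 ≤ n) : 2 * ∑ k ∈ Ico 1 n, k = n*(n-1) := by
  refine Int.le_induction (motive := fun n _ => 2 * ∑ k ∈ Ico 1 n, k = n*(n-1)) ?_ ?_ n hn
  · simp
  · intro n hn ih
    rw [sum_Ico_succ_top' hn]
    linear_combination ih

lemma gauss2 {n : ℤ} (hn : 1 ≤ n) : 6 * ∑ k ∈ Ico 1 n, k^2 = n*(n-1)*(2*n-1) := by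
  refine Int.le_induction (motive := fun n _ => 6 * ∑ k ∈ Ico 1 n, k^2 = n*(n-1)*(2*n-1)) ?_ ?_ n hn
  · simp
  · intro n hn ih
    rw [sum_Ico_succ_top' hn]
    linear_combination ih

lemma layer {t : ℤ} (ht : 0 ≤ t) : ∑ j ∈ Ico 1 (t+1), (2*j-1) = t^2 := by
  refine Int.le_induction (motive := fun t _ => ∑ j ∈ Ico 1 (t+1), (2*j-1) = t^2) ?_ ?_ t ht
  · simp
  · intro t ht ih
    rw [sum_Ico_succ_top' (by omega)]
    linear_combination ih

lemma sum_emod_perm {m n : ℤ} (hn : 0 < n) (h : IsCoprime m n) (f : ℤ → ℤ) :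
    ∑ k ∈ Ico 1 n, f ((m*k) % n) = ∑ k ∈ Ico 1 n, f k := by
  obtain ⟨u, v, huv⟩ := h
  have hcu : IsCoprime u n := ⟨m, v, by linarith [huv]⟩
  have key : ∀ a : ℤ, IsCoprime a n → ∀ k ∈ Ico 1 n, (a*k) % n ∈ Ico 1 n := by
    intro a ha k hk
    rw [Finset.mem_Ico] at hk ⊢
    refine ⟨?_, Int.emod_lt_of_pos _ hn⟩
    rcases (Int.emod_nonneg (a*k) hn.ne').lt_or_eq with h1 | h1
    · omega
    · exfalso
      have hd : n ∣ a * k := Int.dvd_of_emod_eq_zero h1.symm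
      have : n ∣ k := (ha.symm).dvd_of_dvd_mul_left hd
      have := Int.le_of_dvd (by omega) this
      omega
  have hum : ∀ k, 0 ≤ k → k < n → (u * ((m*k) % n)) % n = k := by
    intro k h0 h1
    have e1 : (u * ((m*k) % n)) % n = (u * (m*k)) % n := by
      conv_lhs => rw [Int.mul_emod, Int.emod_emod_of_dvd _ dvd_rfl]
      rw [Int.mul_emod u (m*k) n]
    rw [e1]
    have e2 : u * (m * k) = k + (-(v*k)) * n := by linear_combination k * huv
    rw [e2, Int.add_mul_emod_self_right, Int.emod_eq_of_lt h0 h1]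
  have hmu : ∀ k, 0 ≤ k → k < n → (m * ((u*k) % n)) % n = k := by
    intro k h0 h1
    have e1 : (m * ((u*k) % n)) % n = (m * (u*k)) % n := by
      conv_lhs => rw [Int.mul_emod, Int.emod_emod_of_dvd _ dvd_rfl]
      rw [Int.mul_emod m (u*k) n]
    rw [e1]
    have e2 : m * (u * k) = k + (-(v*k)) * n := by linear_combination k * huv
    rw [e2, Int.add_mul_emod_self_right, Int.emod_eq_of_lt h0 h1]
  refine Finset.sum_nbij' (i := fun k => (m*k) % n) (j := fun k => (u*k) % n)
    (key m ⟨u, v, huv⟩) (key u hcu) ?_ ?_ ?_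
  · intro k hk
    rw [Finset.mem_Ico] at hk
    exact hum k (by omega) (by omega)
  · intro k hk
    rw [Finset.mem_Ico] at hk
    exact hmu k (by omega) (by omega)
  · intro k _; rfl

lemma count_k {m n j : ℤ} (hn : 0 < n) (hm : 0 < m) (h : IsCoprime m n)
    (hj1 : 1 ≤ j) (hjm : j < m) :
    ∑ k ∈ Ico 1 n, (if n*j ≤ m*k then (1:ℤ) else 0) = n - 1 - (n*j)/m := by
  have hd0 : 0 ≤ (n*j)/m := Int.ediv_nonneg (by positivity) hm.le
  have hdn : (n*j)/m < n := (Int.ediv_lt_iff_lt_mul hm).mpr (by nlinarith)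
  have hiff : ∀ k : ℤ, (n*j ≤ m*k ↔ (n*j)/m + 1 ≤ k) := by
    intro k
    constructor
    · intro hk
      have hne : n*j ≠ m*k := by
        intro he
        have hdvd : m ∣ j := h.dvd_of_dvd_mul_left ⟨k, by linarith⟩
        have := Int.le_of_dvd (by omega) hdvd
        omega
      have hlt : n*j < m*k := lt_of_le_of_ne hk hne
      have : (n*j)/m < k := (Int.ediv_lt_iff_lt_mul hm).mpr (by linarith)
      omega
    · intro hk
      have := (Int.ediv_lt_iff_lt_mul hm).mp (show (n*j)/m < k by omega)
      linarith
  have hcong : ∀ k ∈ Ico 1 n, (if n*j ≤ m*k then (1:ℤ) else 0)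
      = (if (n*j)/m + 1 ≤ k then (1:ℤ) else 0) := by
    intro k _
    exact if_congr (hiff k) rfl rfl
  rw [Finset.sum_congr rfl hcong]
  have hsub : Ico ((n*j)/m + 1) n ⊆ Ico 1 n := by
    intro k hk; rw [Finset.mem_Ico] at hk ⊢; omega
  rw [← Finset.sum_subset hsub (fun k hk hk2 => ?_)]
  · have : ∀ k ∈ Ico ((n*j)/m + 1) n, (if (n*j)/m + 1 ≤ k then (1:ℤ) else 0) = 1 := by
      intro k hk; rw [Finset.mem_Ico] at hk; exact if_pos hk.1
    rw [Finset.sum_congr rfl this, Finset.sum_const, Int.card_Ico, nsmul_eq_mul, mul_one]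
    omega
  · rw [Finset.mem_Ico] at hk hk2
    rw [if_neg]; omega

lemma recip {m n : ℤ} (hm : 0 < m) (hn : 0 < n) (h : IsCoprime m n) :
    12*m^2 * Pd m n + 12*n^2 * Pd n m =
      m*(m^2+1)*(n*(n-1)*(2*n-1))
        - n^2*(6*m*(n-1)*(m-1)^2 - 2*n*(m*(m-1)*(2*m-1)) + 3*(n-1)*(m*(m-1))) := by
  -- E1
  have E1 : n^2 * (∑ k ∈ Ico 1 n, ((m*k)/n)^2)
      = (m^2+1) * (∑ k ∈ Ico 1 n, k^2) - 2*m*Pd m n := by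
    have h1 : ∀ k ∈ Ico 1 n, n^2 * ((m*k)/n)^2
        = m^2*k^2 + ((m*k)%n)^2 - 2*m*(k*((m*k)%n)) := by
      intro k _
      have hk := Int.mul_ediv_add_emod (m*k) n
      linear_combination (n*((m*k)/n) + m*k - (m*k)%n) * hk
    have perm2 : ∑ k ∈ Ico 1 n, ((m*k)%n)^2 = ∑ k ∈ Ico 1 n, k^2 := by
      simpa using sum_emod_perm hn h (fun x => x^2)
    calc n^2 * (∑ k ∈ Ico 1 n, ((m*k)/n)^2)
        = ∑ k ∈ Ico 1 n, n^2 * ((m*k)/n)^2 := Finset.mul_sum _ _ _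
      _ = ∑ k ∈ Ico 1 n, (m^2*k^2 + ((m*k)%n)^2 - 2*m*(k*((m*k)%n))) :=
          Finset.sum_congr rfl h1
      _ = (∑ k ∈ Ico 1 n, m^2*k^2) + (∑ k ∈ Ico 1 n, ((m*k)%n)^2)
            - ∑ k ∈ Ico 1 n, 2*m*(k*((m*k)%n)) := by
          rw [Finset.sum_sub_distrib, Finset.sum_add_distrib]
      _ = (m^2+1) * (∑ k ∈ Ico 1 n, k^2) - 2*m*Pd m n := by
          rw [perm2, ← Finset.mul_sum, ← Finset.mul_sum, Pd]; ring
  -- swap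
  have hswap : (∑ k ∈ Ico 1 n, ((m*k)/n)^2)
      = ∑ j ∈ Ico 1 m, (2*j-1) * (n - 1 - (n*j)/m) := by
    have h1 : ∀ k ∈ Ico 1 n, ((m*k)/n)^2
        = ∑ j ∈ Ico 1 m, (if n*j ≤ m*k then 2*j-1 else 0) := by
      intro k hk
      rw [Finset.mem_Ico] at hk
      have ht0 : 0 ≤ (m*k)/n := Int.ediv_nonneg (by nlinarith) hn.le
      have htm : (m*k)/n < m := (Int.ediv_lt_iff_lt_mul hn).mpr (by nlinarith)
      have hcong : ∀ j ∈ Ico 1 m, (if n*j ≤ m*k then (2*j-1:ℤ) else 0)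
          = (if j ≤ (m*k)/n then 2*j-1 else 0) := by
        intro j _
        refine if_congr ?_ rfl rfl
        rw [mul_comm n j]
        exact (Int.le_ediv_iff_mul_le hn).symm
      rw [Finset.sum_congr rfl hcong]
      have hsub : Ico 1 ((m*k)/n + 1) ⊆ Ico 1 m := by
        intro j hj; rw [Finset.mem_Ico] at hj ⊢; omega
      rw [← Finset.sum_subset hsub (fun j hj hj2 => ?_)]
      · rw [← layer ht0]
        refine Finset.sum_congr rfl (fun j hj => ?_)
        rw [Finset.mem_Ico] at hj
        exact (if_pos (by omega : j ≤ m*k/n)).symm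
      · rw [Finset.mem_Ico] at hj hj2
        rw [if_neg]; omega
    rw [Finset.sum_congr rfl h1, Finset.sum_comm]
    refine Finset.sum_congr rfl (fun j hj => ?_)
    rw [Finset.mem_Ico] at hj
    have hsplit : ∀ k, (if n*j ≤ m*k then (2*j-1:ℤ) else 0)
        = (2*j-1) * (if n*j ≤ m*k then (1:ℤ) else 0) := by
      intro k; split <;> ring
    calc ∑ k ∈ Ico 1 n, (if n*j ≤ m*k then (2*j-1:ℤ) else 0)
        = ∑ k ∈ Ico 1 n, (2*j-1) * (if n*j ≤ m*k then (1:ℤ) else 0) :=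
          Finset.sum_congr rfl (fun k _ => hsplit k)
      _ = (2*j-1) * ∑ k ∈ Ico 1 n, (if n*j ≤ m*k then (1:ℤ) else 0) :=
          (Finset.mul_sum _ _ _).symm
      _ = (2*j-1) * (n - 1 - (n*j)/m) := by
          rw [count_k hn hm h hj.1 hj.2]
  -- E2
  have cardm : ((Ico (1:ℤ) m).card : ℤ) = m - 1 := by
    rw [Int.card_Ico]; omega
  have permA : ∑ j ∈ Ico 1 m, (n*j)%m = ∑ j ∈ Ico 1 m, j := by
    simpa using sum_emod_perm hm h.symm (fun x => x)
  have permP : ∑ j ∈ Ico 1 m, j*((n*j)%m) = Pd n m := by rw [Pd]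
  have E2 : 6 * (m * (∑ k ∈ Ico 1 n, ((m*k)/n)^2))
      = 6*m*(n-1)*(m*(m-1)) - 6*m*(n-1)*(m-1) - 2*n*(m*(m-1)*(2*m-1))
        + 3*n*(m*(m-1)) + 12*(Pd n m) - 3*(m*(m-1)) := by
    have h2 : ∀ j ∈ Ico 1 m, m * ((2*j-1) * (n - 1 - (n*j)/m))
        = 2*(m*(n-1))*j - m*(n-1) - 2*n*j^2 + n*j + 2*(j*((n*j)%m)) - (n*j)%m := by
      intro j _
      have hj := Int.mul_ediv_add_emod (n*j) m
      linear_combination (1-2*j) * hj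
    have g1 := gauss1 (show 1 ≤ m by omega)
    have g2 := gauss2 (show 1 ≤ m by omega)
    rw [hswap, Finset.mul_sum, Finset.sum_congr rfl h2]
    rw [Finset.sum_sub_distrib, Finset.sum_add_distrib, Finset.sum_add_distrib,
        Finset.sum_sub_distrib, Finset.sum_sub_distrib]
    simp only [← Finset.mul_sum]
    rw [Finset.sum_const, nsmul_eq_mul, permA, permP, cardm]
    have p1 : ∑ x ∈ Ico 1 m, 2*(m*(n-1))*x = 2*(m*(n-1)) * ∑ x ∈ Ico 1 m, x :=
      (Finset.mul_sum _ _ _).symm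
    have p2 : ∑ x ∈ Ico 1 m, n*x = n * ∑ x ∈ Ico 1 m, x := (Finset.mul_sum _ _ _).symm
    linear_combination (6*m*(n-1) + 3*n - 3)*g1 - 2*n*g2 + 6*p1 + 6*p2
  have g3 := gauss2 (show 1 ≤ n by omega)
  have E1' : 6*(n^2 * (∑ k ∈ Ico 1 n, ((m*k)/n)^2))
      = (m^2+1) * (n*(n-1)*(2*n-1)) - 12*m*Pd m n := by
    linear_combination 6*E1 + (m^2+1)*g3
  linear_combination m * E1' - n^2 * E2

lemma Pd_le {a q : ℤ} (hq : 0 < q) (h : IsCoprime a q) :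
    6 * Pd a q ≤ q*(q-1)*(2*q-1) := by
  have perm2 : ∑ k ∈ Ico 1 q, ((a*k)%q)^2 = ∑ k ∈ Ico 1 q, k^2 := by
    simpa using sum_emod_perm hq h (fun x => x^2)
  have h1 : ∀ k ∈ Ico 1 q, 2*(k * ((a*k)%q)) ≤ k^2 + ((a*k)%q)^2 := by
    intro k _; nlinarith [sq_nonneg (k - (a*k)%q)]
  have hs := Finset.sum_le_sum h1
  rw [Finset.sum_add_distrib, perm2, ← Finset.mul_sum] at hs
  have g2 := gauss2 (show 1 ≤ q by omega)
  have : 2 * Pd a q ≤ 2 * ∑ k ∈ Ico 1 q, k^2 := by rw [Pd]; linarith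
  linarith

lemma Pd_ge {a q : ℤ} (hq : 0 < q) (h : IsCoprime a q) :
    q*(q-1)*(q+1) ≤ 6 * Pd a q := by
  have perm2 : ∑ k ∈ Ico 1 q, ((a*k)%q)^2 = ∑ k ∈ Ico 1 q, k^2 := by
    simpa using sum_emod_perm hq h (fun x => x^2)
  have perm1 : ∑ k ∈ Ico 1 q, ((a*k)%q) = ∑ k ∈ Ico 1 q, k := by
    simpa using sum_emod_perm hq h (fun x => x)
  have cardq : ((Ico (1:ℤ) q).card : ℤ) = q - 1 := by
    rw [Int.card_Ico]; omega
  have h1 : ∀ k ∈ Ico 1 q, 2*q*k - k^2 - q^2 + 2*q*((a*k)%q) - ((a*k)%q)^2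
      ≤ 2*(k * ((a*k)%q)) := by
    intro k _; nlinarith [sq_nonneg (k - q + (a*k)%q)]
  have hs := Finset.sum_le_sum h1
  rw [Finset.sum_sub_distrib, Finset.sum_add_distrib, Finset.sum_sub_distrib,
    Finset.sum_sub_distrib, ← Finset.mul_sum, ← Finset.mul_sum,
    Finset.sum_const, nsmul_eq_mul, cardq, perm1, perm2] at hs
  have g1 := gauss1 (show 1 ≤ q by omega)
  have g2 := gauss2 (show 1 ≤ q by omega)
  have hP : ∑ k ∈ Ico 1 q, 2*(k * ((a*k)%q)) = 2 * Pd a q := by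
    rw [Pd, Finset.mul_sum]
  rw [hP] at hs
  nlinarith [hs, g1, g2]

lemma Pd_neg {m n : ℤ} (hn : 0 < n) (h : IsCoprime m n) :
    2 * Pd m n + 2 * Pd (n - m) n = n^2*(n-1) := by
  have key : ∀ k ∈ Ico 1 n, ((n-m)*k) % n = n - (m*k)%n := by
    intro k hk
    rw [Finset.mem_Ico] at hk
    have h1 : ((n-m)*k) % n = (-(m*k)) % n := by
      have e : (n-m)*k = -(m*k) + k*n := by ring
      rw [e, Int.add_mul_emod_self_right]
    have hnd : (m*k) % n ≠ 0 := by
      intro h0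
      have hdvd : n ∣ k := h.symm.dvd_of_dvd_mul_left (Int.dvd_of_emod_eq_zero h0)
      have := Int.le_of_dvd (by omega) hdvd
      omega
    have hb1 : 0 ≤ (m*k)%n := Int.emod_nonneg _ hn.ne'
    have hb2 : (m*k)%n < n := Int.emod_lt_of_pos _ hn
    have h2 : (-(m*k)) % n = n - (m*k)%n := by
      have e1 : (n - (m*k)%n) % n = (-(m*k)) % n := by
        have e2 : n - (m*k)%n = -((m*k)%n) + 1*n := by ring
        rw [e2, Int.add_mul_emod_self_right]
        rw [Int.emod_eq_emod_iff_emod_sub_eq_zero]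
        have e3 : -(m*k%n) - -(m*k) = n * ((m*k)/n) := by
          have := Int.mul_ediv_add_emod (m*k) n
          linarith
        rw [e3]
        exact Int.mul_emod_right _ _
      rw [← e1, Int.emod_eq_of_lt (by omega) (by omega)]
    rw [h1, h2]
  have hsum : Pd m n + Pd (n-m) n = ∑ k ∈ Ico 1 n, k*n := by
    rw [Pd, Pd, ← Finset.sum_add_distrib]
    refine Finset.sum_congr rfl (fun k hk => ?_)
    rw [key k hk]; ring
  have g1 := gauss1 (show 1 ≤ n by omega)
  have : ∑ k ∈ Ico 1 n, k*n = (∑ k ∈ Ico 1 n, k)*n := (Finset.sum_mul _ _ _).symm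
  rw [this] at hsum
  nlinarith [hsum, g1]

lemma P2_formula {n : ℤ} (hodd : Odd n) (h3 : 3 ≤ n) :
    48 * Pd 2 n = 2*(n*(n-1)*(7*n-5)) := by
  have hcop : IsCoprime (2:ℤ) n := by
    obtain ⟨j, hj⟩ := hodd
    exact ⟨-j, 1, by linear_combination hj⟩
  have h := recip (by norm_num) (by omega : (0:ℤ) < n) hcop
  have hq : Pd n 2 = 1 := by
    have h2 : Ico (1:ℤ) 2 = {1} := by decide
    rw [Pd, h2, Finset.sum_singleton, mul_one, one_mul]
    exact Int.odd_iff.mp hodd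
  rw [hq] at h
  linear_combination h

lemma caseA {m n : ℤ} (hm3 : 3 ≤ m) (hmn : 2*m + 1 ≤ n) (hcop : IsCoprime m n)
    (hP2 : 48 * Pd 2 n = 2*(n*(n-1)*(7*n-5))) : Pd m n < Pd 2 n := by
  have hrec := recip (by omega : (0:ℤ) < m) (by omega : (0:ℤ) < n) hcop
  have hlow := Pd_ge (by omega : (0:ℤ) < m) hcop.symm
  have key1 : 2*n^2*(m*(m-1)*(m+1)) ≤ 12*n^2*Pd n m := by
    nlinarith [hlow, sq_nonneg n]
  have hP2' : 48*m^2*Pd 2 n = m^2*(2*(n*(n-1)*(7*n-5))) := by linear_combination m^2*hP2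
  have hpoly : 0 < m^2*(2*(n*(n-1)*(7*n-5)))
      - 4*(m*(m^2+1)*(n*(n-1)*(2*n-1))
        - n^2*(6*m*(n-1)*(m-1)^2 - 2*n*(m*(m-1)*(2*m-1)) + 3*(n-1)*(m*(m-1))))
      + 8*(n^2*(m*(m-1)*(m+1))) := by
    obtain ⟨a, ha, rfl⟩ : ∃ a, 0 ≤ a ∧ m = a + 3 := ⟨m - 3, by omega, by ring⟩
    obtain ⟨b, hb, rfl⟩ : ∃ b, 0 ≤ b ∧ n = 2*a + 7 + b := ⟨n - 2*a - 7, by omega, by ring⟩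
    nlinarith [mul_nonneg ha hb, mul_nonneg (mul_nonneg ha ha) hb,
      mul_nonneg (mul_nonneg ha hb) hb, mul_nonneg (mul_nonneg (mul_nonneg ha ha) ha) hb,
      mul_nonneg (mul_nonneg (mul_nonneg ha ha) hb) hb,
      mul_nonneg (mul_nonneg (mul_nonneg ha hb) hb) hb,
      mul_nonneg (mul_nonneg (mul_nonneg (mul_nonneg ha ha) ha) ha) hb,
      mul_nonneg (mul_nonneg (mul_nonneg (mul_nonneg ha ha) ha) hb) hb,
      mul_nonneg (mul_nonneg (mul_nonneg (mul_nonneg ha ha) hb) hb) hb,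
      mul_nonneg (mul_nonneg (mul_nonneg (mul_nonneg ha ha) ha) ha) ha,
      mul_nonneg ha ha, mul_nonneg hb hb, mul_nonneg (mul_nonneg hb hb) hb,
      mul_nonneg (mul_nonneg ha ha) ha]
  by_contra hcon
  push_neg at hcon
  have hmul := mul_le_mul_of_nonneg_left hcon (show (0:ℤ) ≤ 48*m^2 by positivity)
  linarith [hrec, key1, hP2', hpoly, hmul]

lemma caseB {c n : ℤ} (hc3 : 3 ≤ c) (hcn : 2*c + 3 ≤ n) (hcop : IsCoprime c n)
    (hP2 : 48 * Pd 2 n = 2*(n*(n-1)*(7*n-5))) : n^2*(n-1) < 2 * Pd c n + 2 * Pd 2 n := by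
  have hrec := recip (by omega : (0:ℤ) < c) (by omega : (0:ℤ) < n) hcop
  have hup := Pd_le (by omega : (0:ℤ) < c) hcop.symm
  have key1 : 12*n^2*Pd n c ≤ 2*n^2*(c*(c-1)*(2*c-1)) := by
    nlinarith [hup, sq_nonneg n]
  have hP2' : 48*c^2*Pd 2 n = c^2*(2*(n*(n-1)*(7*n-5))) := by linear_combination c^2*hP2
  have hpoly : 0 < 4*(c*(c^2+1)*(n*(n-1)*(2*n-1))
        - n^2*(6*c*(n-1)*(c-1)^2 - 2*n*(c*(c-1)*(2*c-1)) + 3*(n-1)*(c*(c-1))))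
      - 8*(n^2*(c*(c-1)*(2*c-1))) + c^2*(2*(n*(n-1)*(7*n-5))) - 24*(c^2*(n^2*(n-1))) := by
    obtain ⟨a, ha, rfl⟩ : ∃ a, 0 ≤ a ∧ c = a + 3 := ⟨c - 3, by omega, by ring⟩
    obtain ⟨b, hb, rfl⟩ : ∃ b, 0 ≤ b ∧ n = 2*a + 9 + b := ⟨n - 2*a - 9, by omega, by ring⟩
    nlinarith [mul_nonneg ha hb, mul_nonneg (mul_nonneg ha ha) hb,
      mul_nonneg (mul_nonneg ha hb) hb, mul_nonneg (mul_nonneg (mul_nonneg ha ha) ha) hb,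
      mul_nonneg (mul_nonneg (mul_nonneg ha ha) hb) hb,
      mul_nonneg (mul_nonneg (mul_nonneg ha hb) hb) hb,
      mul_nonneg (mul_nonneg (mul_nonneg (mul_nonneg ha ha) ha) ha) hb,
      mul_nonneg (mul_nonneg (mul_nonneg (mul_nonneg ha ha) ha) hb) hb,
      mul_nonneg (mul_nonneg (mul_nonneg (mul_nonneg ha ha) hb) hb) hb,
      mul_nonneg (mul_nonneg (mul_nonneg (mul_nonneg ha ha) ha) ha) ha,
      mul_nonneg ha ha, mul_nonneg hb hb, mul_nonneg (mul_nonneg hb hb) hb,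
      mul_nonneg (mul_nonneg ha ha) ha]
  by_contra hcon
  push_neg at hcon
  have hmul := mul_le_mul_of_nonneg_left hcon (show (0:ℤ) ≤ 24*c^2 by positivity)
  linarith [hrec, key1, hP2', hpoly, hmul]

lemma main_int {n m : ℤ} (hn5 : 5 ≤ n) (hodd : Odd n) (hm1 : 3 ≤ m) (hm2 : m ≤ n - 1)
    (hcop : IsCoprime m n) (hne : 2*m ≠ n + 1) : Pd m n < Pd 2 n := by
  obtain ⟨j, hj⟩ := hodd
  have hP2 := P2_formula ⟨j, hj⟩ (by omega)
  have hpar : 2*m ≠ n := by omega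
  rcases hpar.lt_or_gt with hlt | hgt
  · exact caseA hm1 (by omega) hcop hP2
  · -- 2m > n
    have hcop' : IsCoprime (n - m) n := by
      obtain ⟨u, v, huv⟩ := hcop
      exact ⟨-u, v + u, by linear_combination huv⟩
    have hneg := Pd_neg (show (0:ℤ) < n by omega) hcop
    have hc1 : n - m = 1 ∨ n - m = 2 ∨ 3 ≤ n - m := by omega
    rcases hc1 with hc | hc | hc
    · -- m = n - 1
      have hp1 : Pd (n - m) n = ∑ k ∈ Ico 1 n, k^2 := by
        rw [hc, Pd]
        refine Finset.sum_congr rfl (fun k hk => ?_)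
        rw [Finset.mem_Ico] at hk
        rw [one_mul, Int.emod_eq_of_lt (by omega) (by omega)]; ring
      have g2 := gauss2 (show 1 ≤ n by omega)
      rw [hp1] at hneg
      nlinarith [hneg, g2, hP2, mul_pos (mul_pos (show (0:ℤ) < n by omega)
        (show (0:ℤ) < n - 1 by omega)) (show (0:ℤ) < 6*n - 18 by omega)]
    · -- m = n - 2
      have hn7 : 7 ≤ n := by omega
      rw [hc] at hneg
      nlinarith [hneg, hP2, mul_pos (mul_pos (show (0:ℤ) < n by omega)
        (show (0:ℤ) < n - 1 by omega)) (show (0:ℤ) < 2*n - 10 by omega)]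
    · have hB := caseB hc (by omega) hcop' hP2
      linarith [hneg, hB]

lemma saw_eval {a n : ℤ} (hn : 0 < n) (hnd : ¬ n ∣ a) :
    saw ((a:ℝ)/(n:ℝ)) = ((a % n : ℤ) : ℝ)/(n:ℝ) - 1/2 := by
  have hn0 : (n:ℝ) ≠ 0 := Int.cast_ne_zero.mpr (by omega)
  have hnR : (0:ℝ) < n := by exact_mod_cast hn
  have hne : ¬ ∃ z:ℤ, (z:ℝ) = (a:ℝ)/n := by
    rintro ⟨z, hz⟩
    rw [eq_div_iff hn0] at hz
    have hz' : z * n = a := by exact_mod_cast hz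
    exact hnd ⟨z, by linarith⟩
  rw [saw, if_neg hne]
  have hd := Int.mul_ediv_add_emod a n
  have hb1 : 0 ≤ a % n := Int.emod_nonneg _ hn.ne'
  have hb2 : a % n < n := Int.emod_lt_of_pos _ hn
  have hcast : (a:ℝ)/n = ((a % n : ℤ):ℝ)/n + ((a / n : ℤ):ℝ) := by
    rw [div_add' _ _ _ hn0, div_eq_div_iff hn0 hn0]
    have : ((a:ℤ):ℝ) = (((a % n) + (a / n) * n : ℤ):ℝ) := by
      exact_mod_cast congrArg (fun x : ℤ => (x:ℝ)) (by linarith : a = a % n + (a / n) * n)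
    push_cast at this ⊢
    linear_combination (n:ℝ) * this
  rw [hcast, Int.floor_add_intCast]
  have hfr : ⌊((a % n : ℤ):ℝ)/n⌋ = 0 := by
    rw [Int.floor_eq_zero_iff]
    constructor
    · exact div_nonneg (by exact_mod_cast hb1) hnR.le
    · rw [div_lt_one hnR]; exact_mod_cast hb2
  rw [hfr]
  push_cast
  ring

lemma S_formula {m n : ℤ} (hn : 0 < n) (h : IsCoprime m n) :
    S m n = 12 * ((Pd m n : ℝ)/(n:ℝ)^2) - 3*((n:ℝ) - 1) := by
  have hn0 : (n:ℝ) ≠ 0 := Int.cast_ne_zero.mpr (by omega)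
  have hnR : (0:ℝ) < n := by exact_mod_cast hn
  have h1n : (1:ℤ) ≤ n := hn
  rw [S, abs_of_pos hn, ← Finset.Ico_insert_right h1n,
    Finset.sum_insert Finset.right_notMem_Ico]
  have hsaw1 : saw 1 = 0 := by
    rw [saw, if_pos ⟨1, by norm_num⟩]
  have hterm : saw ((n:ℝ)/(n:ℝ)) * saw ((m:ℝ)*(n:ℝ)/(n:ℝ)) = 0 := by
    rw [div_self hn0, hsaw1, zero_mul]
  rw [hterm, zero_add]
  have hmain : ∀ k ∈ Ico (1:ℤ) n, saw ((k:ℝ)/n) * saw ((m:ℝ)*k/n)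
      = ((k:ℝ)*((m*k % n : ℤ):ℝ))*(1/(n:ℝ)^2) - (k:ℝ)*(1/(2*n))
        - ((m*k % n : ℤ):ℝ)*(1/(2*n)) + 1/4 := by
    intro k hk
    rw [Finset.mem_Ico] at hk
    have hndk : ¬ n ∣ k := fun hd => by
      have := Int.le_of_dvd (by omega) hd; omega
    have hndmk : ¬ n ∣ m*k := fun hd => by
      have h2 : n ∣ k := h.symm.dvd_of_dvd_mul_left hd
      have := Int.le_of_dvd (by omega) h2; omega
    have e1 := saw_eval hn hndk
    have e2 := saw_eval hn hndmk
    have ek : ((k % n : ℤ):ℝ) = (k:ℝ) := by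
      rw [Int.emod_eq_of_lt (by omega) (by omega)]
    have ecast : (m:ℝ)*(k:ℝ)/(n:ℝ) = (((m*k:ℤ)):ℝ)/n := by push_cast; ring
    rw [ecast, e2, e1, ek]
    field_simp
    ring
  rw [Finset.sum_congr rfl hmain]
  simp only [Finset.sum_add_distrib, Finset.sum_sub_distrib, ← Finset.sum_mul,
    Finset.sum_const, nsmul_eq_mul]
  have c1 : ∑ k ∈ Ico (1:ℤ) n, (k:ℝ)*((m*k % n : ℤ):ℝ) = ((Pd m n : ℤ):ℝ) := by
    rw [Pd]
    push_cast
    rfl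
  have c2 : ∑ k ∈ Ico (1:ℤ) n, ((m*k % n : ℤ):ℝ) = ∑ k ∈ Ico (1:ℤ) n, (k:ℝ) := by
    have hp := congrArg (fun z : ℤ => (z:ℝ)) (sum_emod_perm hn h (fun x => x))
    push_cast at hp
    exact hp
  have c3 : (2:ℝ) * ∑ k ∈ Ico (1:ℤ) n, (k:ℝ) = (n:ℝ)*((n:ℝ)-1) := by
    have hp := congrArg (fun z : ℤ => (z:ℝ)) (gauss1 h1n)
    push_cast at hp
    exact hp
  have c4 : ((Ico (1:ℤ) n).card : ℝ) = (n:ℝ) - 1 := by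
    rw [Int.card_Ico]
    have : ((n - 1).toNat : ℤ) = n - 1 := by omega
    exact_mod_cast this
  rw [c1, c2, c4]
  have hS : ∑ k ∈ Ico (1:ℤ) n, (k:ℝ) = (n:ℝ)*((n:ℝ)-1)/2 := by
    rw [eq_div_iff (by norm_num : (2:ℝ) ≠ 0)]; linarith
  rw [hS]
  field_simp
  ring

end DedekindAux

theorem stmt7 (n : ℤ) (hn : 3 ≤ n) (hodd : Odd n) (m : ℤ)
    (hm1 : 3 ≤ m) (hm2 : m ≤ n - 1) (hg : Int.gcd m n = 1) (hne : m ≠ (n + 1) / 2) :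
    S 2 n > S m n := by
  obtain ⟨j, hj⟩ := hodd
  have hn5 : 5 ≤ n := by omega
  have hcop : IsCoprime m n := Int.isCoprime_iff_gcd_eq_one.mpr hg
  have hcop2 : IsCoprime (2:ℤ) n := ⟨-j, 1, by linear_combination hj⟩
  have hne' : 2*m ≠ n + 1 := by omega
  have hmain := DedekindAux.main_int hn5 ⟨j, hj⟩ hm1 hm2 hcop hne'
  have h0 : (0:ℤ) < n := by omega
  rw [DedekindAux.S_formula h0 hcop, DedekindAux.S_formula h0 hcop2]
  have hcast : (DedekindAux.Pd m n : ℝ) < (DedekindAux.Pd 2 n : ℝ) := by exact_mod_cast hmain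
  have hn2 : (0:ℝ) < (n:ℝ)^2 := by positivity
  have hdiv : (DedekindAux.Pd m n : ℝ)/(n:ℝ)^2 < (DedekindAux.Pd 2 n : ℝ)/(n:ℝ)^2 := by
    gcongr
  linarith
end
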